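/- The group K_n = ⟨a, b | b(a²b²)ⁿ = (a²b²)ⁿa, a(a²b²)^{n+1} = (a²b²)^{n+1}b⟩ has the element (a²b²)^{2n+1} central. -/

import Mathlib

open FreeGroup

def a : FreeGroup (Fin 2) := FreeGroup.of 0
def b : FreeGroup (Fin 2) := FreeGroup.of 1

/-- The relations of `K_n = ⟨a, b | b(a²b²)ⁿ = (a²b²)ⁿa, a(a²b²)^{n+1} = (a²b²)^{n+1}b⟩`. -/
def relsK (n : ℕ) : Set (FreeGroup (Fin 2)) :=
  {b * (a ^ 2 * b ^ 2) ^ n * ((a ^ 2 * b ^ 2) ^ n * a)⁻¹,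
   a * (a ^ 2 * b ^ 2) ^ (n + 1) * ((a ^ 2 * b ^ 2) ^ (n + 1) * b)⁻¹}

/-! The power `cⁿ` conjugates `x` to `y` and `cⁿ⁺¹` conjugates `y` back to `x`, so their product
`c²ⁿ⁺¹` centralizes both `x` and `y`; in `K_n` these are the generators, with `c = a²b²`. -/

theorem commute_pow_two_mul_add_one_of_semiconjBy {G : Type*} [Monoid G] {x y c : G} {n : ℕ}
    (hxy : SemiconjBy (c ^ n) x y) (hyx : SemiconjBy (c ^ (n + 1)) y x) :
    Commute (c ^ (2 * n + 1)) x ∧ Commute (c ^ (2 * n + 1)) y := by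
  have hsplit : c ^ (2 * n + 1) = c ^ (n + 1) * c ^ n := by
    rw [← pow_add]; congr 1; omega
  refine ⟨?_, ?_⟩
  · rw [hsplit]
    exact hyx.mul_left hxy
  · rw [hsplit, ← (Commute.pow_pow_self c n (n + 1)).eq]
    exact hxy.mul_left hyx

theorem PresentedGroup.mem_center_of_forall_commute_of {α : Type*} {rels : Set (FreeGroup α)}
    {g : PresentedGroup rels} (h : ∀ i, Commute g (PresentedGroup.of i)) :
    g ∈ Subgroup.center (PresentedGroup rels) := by
  rw [Subgroup.center_eq_iInf (PresentedGroup.closure_range_of rels)]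
  simp only [Subgroup.mem_iInf, Set.forall_mem_range, Subgroup.mem_centralizer_singleton_iff]
  exact fun i ↦ (h i).eq

theorem relsK_semiconjBy_left (n : ℕ) :
    SemiconjBy
      (((PresentedGroup.of 0 : PresentedGroup (relsK n)) ^ 2 * PresentedGroup.of 1 ^ 2) ^ n)
      (PresentedGroup.of 0) (PresentedGroup.of 1) := by
  have := PresentedGroup.mk_eq_mk_of_mul_inv_mem (rels := relsK n) (Set.mem_insert _ _)
  simp only [_root_.map_mul, _root_.map_pow] at this
  exact this.symm

theorem relsK_semiconjBy_right (n : ℕ) :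
    SemiconjBy
      (((PresentedGroup.of 0 : PresentedGroup (relsK n)) ^ 2 * PresentedGroup.of 1 ^ 2) ^ (n + 1))
      (PresentedGroup.of 1) (PresentedGroup.of 0) := by
  have := PresentedGroup.mk_eq_mk_of_mul_inv_mem (rels := relsK n) (Set.mem_insert_of_mem _ rfl)
  simp only [_root_.map_mul, _root_.map_pow] at this
  exact this.symm

theorem hn_central_in_Kn_general (n : ℕ) :
    ((PresentedGroup.of 0 : PresentedGroup (relsK n)) ^ 2 *
        (PresentedGroup.of 1 : PresentedGroup (relsK n)) ^ 2) ^ (2 * n + 1) ∈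
      Subgroup.center (PresentedGroup (relsK n)) := by
  obtain ⟨hA, hB⟩ := commute_pow_two_mul_add_one_of_semiconjBy
    (relsK_semiconjBy_left n) (relsK_semiconjBy_right n)
  refine PresentedGroup.mem_center_of_forall_commute_of fun i ↦ ?_
  fin_cases i
  exacts [hA, hB]

/-- In `K_n`, the element `(a²b²)^{2n+1}` is central. -/
theorem hn_central_in_Kn (n : ℕ) (hn : 0 < n) :
    ((PresentedGroup.of 0 : PresentedGroup (relsK n)) ^ 2 *
        (PresentedGroup.of 1 : PresentedGroup (relsK n)) ^ 2) ^ (2 * n + 1) ∈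
      Subgroup.center (PresentedGroup (relsK n)) :=
  hn_central_in_Kn_general n
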